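/- Let 0 < r ≤ 1. Define λ(f) = min{2(1−r/f), 1 − r/(2f)} for f > 0, and define λ_{1,2}(f) as follows: if 0 < r < 1/3, λ_{1,2}(f) = 3(1−r) for 0 ≤ f < 2/3, λ_{1,2}(f) = 3 − r/(1−f) for 2/3 ≤ f < 1−r, and λ_{1,2}(f) = 2(1−r)/f for 1−r ≤ f ≤ 1; if 1/3 ≤ r ≤ 1, λ_{1,2}(f) = 3(1−r) for 0 ≤ f < 2/3 and λ_{1,2}(f) = 2(1−r)/f for 2/3 ≤ f ≤ 1. Then the infimum of λ(f) + λ_{1,2}(f) over f ∈ [r, 1] equals 3(1−r) if 0 < r ≤ 2/3, and equals 2(1−r)/r if 2/3 ≤ r ≤ 1. (This is the computation of the joint error exponent d_{1,2}(r) in equation (30) of the paper for the DDF protocol in the multiple access relay channel.) -/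

import Mathlib

/-!
At f = r we have λ(r) = 0, and λ_{1,2}(r) is the claimed value, which on 0 < r ≤ 1 equals
min (3(1-r)) (2(1-r)/r); so it suffices to bound the objective below by this minimum. Where
λ_{1,2}(f) = 3(1-r) this is λ ≥ 0. On the middle branch, r/(1-f) ≤ 1 and f ≥ 2/3 give
3(1-r) - λ_{1,2}(f) ≤ 1 - 3r ≤ λ(f). On the last branch both candidates for
λ(f) + 2(1-r)/f have the form a + b/f, hence are monotone in f and bounded below by their
values at f = r and f = 1, which dominate the minimum.
-/

-- `relayExponent`, `destExponent` and `ddfExponent` are λ(f), λ_{1,2}(f) and d_{1,2}(r).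
noncomputable def relayExponent (r f : ℝ) : ℝ :=
  min (2 * (1 - r / f)) (1 - r / (2 * f))

noncomputable def destExponent (r f : ℝ) : ℝ :=
  if r < 1 / 3 then
    (if f < 2 / 3 then 3 * (1 - r)
     else if f < 1 - r then 3 - r / (1 - f)
     else 2 * (1 - r) / f)
  else
    (if f < 2 / 3 then 3 * (1 - r)
     else 2 * (1 - r) / f)

noncomputable def ddfExponent (r : ℝ) : ℝ :=
  min (3 * (1 - r)) (2 * (1 - r) / r)

lemma ddfExponent_eq_ite {r : ℝ} (hr0 : 0 < r) (hr1 : r ≤ 1) :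
    ddfExponent r = if r ≤ 2 / 3 then 3 * (1 - r) else 2 * (1 - r) / r := by
  unfold ddfExponent
  split_ifs with h
  · refine min_eq_left ?_
    rw [le_div_iff₀ hr0]
    nlinarith
  · refine min_eq_right ?_
    rw [div_le_iff₀ hr0]
    nlinarith

lemma min_div_le_div_of_le_of_le {a b f : ℝ} (c : ℝ) (ha : 0 < a) (haf : a ≤ f) (hfb : f ≤ b) :
    min (c / a) (c / b) ≤ c / f := by
  rcases le_or_gt 0 c with hc | hc
  · exact min_le_of_right_le (div_le_div_of_nonneg_left hc (ha.trans_le haf) hfb)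
  · refine min_le_of_left_le ?_
    have := div_le_div_of_nonneg_left (neg_nonneg.2 hc.le) ha haf
    rwa [neg_div, neg_div, neg_le_neg_iff] at this

lemma relayExponent_nonneg {r f : ℝ} (hr : 0 ≤ r) (hrf : r ≤ f) : 0 ≤ relayExponent r f := by
  have h : r / f ≤ 1 := div_le_one_of_le₀ hrf (hr.trans hrf)
  have h2 : r / (2 * f) = r / f / 2 := by ring
  exact le_min (by linarith) (by rw [h2]; linarith)

lemma relayExponent_self {r : ℝ} (hr : r ≠ 0) : relayExponent r r = 0 := by
  have h2 : r / (2 * r) = 1 / 2 := by field_simp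
  rw [relayExponent, div_self hr, h2]
  norm_num

lemma one_sub_three_mul_le_relayExponent {r f : ℝ} (hr : 0 ≤ r) (hf : 2 / 3 ≤ f) :
    1 - 3 * r ≤ relayExponent r f := by
  have h : r / f ≤ 3 * r / 2 := by
    rw [div_le_iff₀ (by linarith)]
    nlinarith
  have h2 : r / (2 * f) = r / f / 2 := by ring
  exact le_min (by linarith) (by rw [h2]; linarith)

lemma destExponent_self (r : ℝ) :
    destExponent r r = if r ≤ 2 / 3 then 3 * (1 - r) else 2 * (1 - r) / r := by
  unfold destExponent
  split_ifs <;> first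
    | rfl
    | linarith
    | (obtain rfl : r = 2 / 3 := by linarith
       norm_num)

section LowerBound

variable {r f : ℝ}

lemma le_add_div_of_endpoints {d a b : ℝ} (hr : 0 < r) (hrf : r ≤ f) (hf1 : f ≤ 1)
    (hleft : d ≤ a + b / r) (hright : d ≤ a + b) : d ≤ a + b / f := by
  have h := min_div_le_div_of_le_of_le b hr hrf hf1
  rw [div_one] at h
  calc d ≤ min (a + b / r) (a + b) := le_min hleft hright
    _ = a + min (b / r) b := min_add_add_left _ _ _
    _ ≤ a + b / f := by gcongr

lemma ddfExponent_le_relayExponent_add (hr0 : 0 < r) (hrf : r ≤ f) (hf1 : f ≤ 1) :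
    ddfExponent r ≤ relayExponent r f + 2 * (1 - r) / f := by
  have hr1 : r ≤ 1 := hrf.trans hf1
  have hfirst : ddfExponent r ≤ 2 * (1 - r / f) + 2 * (1 - r) / f := by
    rw [show 2 * (1 - r / f) + 2 * (1 - r) / f = 2 + (2 - 4 * r) / f by ring]
    refine le_add_div_of_endpoints hr0 hrf hf1 ?_ ?_
    · have hleft : 2 + (2 - 4 * r) / r = 2 * (1 - r) / r := by field_simp; ring
      exact hleft ▸ min_le_right _ _
    · exact min_le_of_left_le (by linarith)
  have hsecond : ddfExponent r ≤ 1 - r / (2 * f) + 2 * (1 - r) / f := by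
    rw [show 1 - r / (2 * f) + 2 * (1 - r) / f = 1 + (2 - 5 * r / 2) / f by ring]
    refine le_add_div_of_endpoints hr0 hrf hf1 ?_ ?_
    · have hleft : 1 + (2 - 5 * r / 2) / r = 2 * (1 - r) / r + 1 / 2 := by field_simp; ring
      exact min_le_of_right_le (by linarith)
    · rcases le_or_gt r (2 / 3) with h | h
      · exact min_le_of_left_le (by linarith)
      · refine min_le_of_right_le ?_
        rw [div_le_iff₀ hr0]
        nlinarith
  rw [relayExponent, ← min_add_add_right]
  exact le_min hfirst hsecond

lemma ddfExponent_le_relayExponent_add_destExponent (hr0 : 0 < r) (hrf : r ≤ f) (hf1 : f ≤ 1) :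
    ddfExponent r ≤ relayExponent r f + destExponent r f := by
  have hrelay := relayExponent_nonneg hr0.le hrf
  have htail := ddfExponent_le_relayExponent_add hr0 hrf hf1
  have hdd : ddfExponent r ≤ 3 * (1 - r) := min_le_left _ _
  unfold destExponent
  split_ifs with _ hf
  · linarith
  · have hratio : r / (1 - f) ≤ 1 := div_le_one_of_le₀ (by linarith) (by linarith)
    linarith [one_sub_three_mul_le_relayExponent hr0.le (not_lt.1 hf)]
  all_goals linarith

end LowerBound

/-- Computation of the joint error exponent d_{1,2}(r) (equation (30)):
the infimum over f ∈ [r,1] of λ(f) + λ_{1,2}(f) for the DDF protocol in the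
MAR channel. -/
theorem d_one_two_inf (r : ℝ) (hr0 : 0 < r) (hr1 : r ≤ 1) :
    sInf {y : ℝ | ∃ f : ℝ, r ≤ f ∧ f ≤ 1 ∧
        y = min (2 * (1 - r / f)) (1 - r / (2 * f)) +
          (if r < 1 / 3 then
            (if f < 2 / 3 then 3 * (1 - r)
             else if f < 1 - r then 3 - r / (1 - f)
             else 2 * (1 - r) / f)
           else
            (if f < 2 / 3 then 3 * (1 - r)
             else 2 * (1 - r) / f))} =
      (if r ≤ 2 / 3 then 3 * (1 - r) else 2 * (1 - r) / r) := by
  rw [← ddfExponent_eq_ite hr0 hr1]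
  refine IsLeast.csInf_eq ⟨⟨r, le_rfl, hr1, ?_⟩, ?_⟩
  · change _ = relayExponent r r + destExponent r r
    rw [relayExponent_self hr0.ne', destExponent_self, ddfExponent_eq_ite hr0 hr1, zero_add]
  · rintro _ ⟨f, hrf, hf1, rfl⟩
    exact ddfExponent_le_relayExponent_add_destExponent hr0 hrf hf1
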